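/- arXiv:1811.02876 — 2 statements merged into one kernel-verified Lean document; each statement's English description precedes it below -/
import Mathlib

section
/- Let v ∈ Γ be primitive with (v.v) < 0. Then disc(K_v) ≡ 0 (mod 6) if and only if K_v = ℤh² + ℤv, and disc(K_v) ≡ 2 (mod 6) if and only if ℤh² + ℤv has index 3 in K_v. -/
open scoped BigOperators

noncomputable section

/-- The negative definite `E₈` Gram matrix. -/
def E8M : Matrix (Fin 8) (Fin 8) ℤ := - CartanMatrix.E₈

/-- The Gram matrix of the cubic lattice `Γ̄ = E₈(-1)² ⊕ U² ⊕ I₀,₃` on `ℤ²³`. -/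
def gramC : Fin 23 → Fin 23 → ℤ := fun i j =>
  if i.val < 8 ∧ j.val < 8 then
    E8M ⟨i.val % 8, Nat.mod_lt _ (by norm_num)⟩ ⟨j.val % 8, Nat.mod_lt _ (by norm_num)⟩
  else if 8 ≤ i.val ∧ i.val < 16 ∧ 8 ≤ j.val ∧ j.val < 16 then
    E8M ⟨(i.val - 8) % 8, Nat.mod_lt _ (by norm_num)⟩ ⟨(j.val - 8) % 8, Nat.mod_lt _ (by norm_num)⟩
  else if (i.val = 16 ∧ j.val = 17) ∨ (i.val = 17 ∧ j.val = 16) ∨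
      (i.val = 18 ∧ j.val = 19) ∨ (i.val = 19 ∧ j.val = 18) then 1
  else if 20 ≤ i.val ∧ i = j then -1
  else 0

/-- The bilinear form of the cubic lattice `Γ̄`. -/
def GB (x y : Fin 23 → ℤ) : ℤ := ∑ i, ∑ j, gramC i j * x i * y j

/-- The class `h² = (0,…,0,1,1,1)`. -/
def h2 : Fin 23 → ℤ := Pi.single 20 1 + Pi.single 21 1 + Pi.single 22 1

/-- A vector is primitive if it is not `m • w` with `|m| ≥ 2`. -/
def PrimitiveC (v : Fin 23 → ℤ) : Prop :=
  ¬ ∃ (m : ℤ) (w : Fin 23 → ℤ), 2 ≤ |m| ∧ v = m • w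

/-- Membership in `Γ = (h²)^⊥ ⊂ Γ̄`. -/
def inGamma (x : Fin 23 → ℤ) : Prop := GB h2 x = 0

lemma GB_add_right (x y z : Fin 23 → ℤ) : GB x (y + z) = GB x y + GB x z := by
  simp [GB, Pi.add_apply, mul_add, Finset.sum_add_distrib]

lemma GB_smul_right (c : ℤ) (x y : Fin 23 → ℤ) : GB x (c • y) = c * GB x y := by
  simp only [GB, Finset.mul_sum]
  refine Finset.sum_congr rfl fun i _ => Finset.sum_congr rfl fun j _ => ?_
  simp only [Pi.smul_apply, smul_eq_mul]; ring

/-- `Γ = (h²)^⊥` as a submodule of `ℤ²³`. -/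
def Gamma : Submodule ℤ (Fin 23 → ℤ) where
  carrier := {x | GB h2 x = 0}
  add_mem' := by
    intro a b ha hb
    simp only [Set.mem_setOf_eq] at *
    rw [GB_add_right, ha, hb, add_zero]
  zero_mem' := by simp [GB]
  smul_mem' := by
    intro c x hx
    simp only [Set.mem_setOf_eq] at *
    rw [GB_smul_right, hx, mul_zero]

/-- The saturation of a submodule. -/
def sat {R M : Type*} [CommRing R] [IsDomain R] [AddCommGroup M] [Module R M] (N : Submodule R M) :
    Submodule R M where
  carrier := {x | ∃ n : R, n ≠ 0 ∧ n • x ∈ N}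
  add_mem' := by
    rintro x y ⟨n, hn, hx⟩ ⟨m, hm, hy⟩
    refine ⟨n * m, mul_ne_zero hn hm, ?_⟩
    have h1 : (n * m) • (x + y) = m • (n • x) + n • (m • y) := by
      rw [smul_add, mul_comm n m, mul_smul, mul_smul, smul_comm m n y]
    rw [h1]
    exact N.add_mem (N.smul_mem m hx) (N.smul_mem n hy)
  zero_mem' := ⟨1, one_ne_zero, by simp⟩
  smul_mem' := by
    rintro c x ⟨n, hn, hx⟩
    exact ⟨n, hn, by rw [smul_comm]; exact N.smul_mem c hx⟩

/-- The saturation `K_v` of `ℤh² + ℤv` in `Γ̄`. -/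
def Kv (v : Fin 23 → ℤ) : Submodule ℤ (Fin 23 → ℤ) :=
  sat (Submodule.span ℤ ({h2, v} : Set (Fin 23 → ℤ)))

/-- `d` is the discriminant of `K_v`: some ℤ-basis of `K_v` has Gram determinant `d`. -/
def discIs (v : Fin 23 → ℤ) (d : ℤ) : Prop :=
  ∃ x y : Fin 23 → ℤ, Kv v = Submodule.span ℤ ({x, y} : Set (Fin 23 → ℤ)) ∧
    d = GB x x * GB y y - GB x y * GB y x

/-- The index of `ℤh² + ℤv` in its saturation `K_v`. -/
def idx (v : Fin 23 → ℤ) : ℕ :=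
  (Submodule.span ℤ ({h2, v} : Set (Fin 23 → ℤ))).toAddSubgroup.relIndex
    (Kv v).toAddSubgroup

/-- Isometries of the cubic lattice `Γ̄`. -/
def IsIsomC (g : (Fin 23 → ℤ) ≃ₗ[ℤ] (Fin 23 → ℤ)) : Prop := ∀ x y, GB (g x) (g y) = GB x y

end

/-!
Write `L = ℤh + ℤv` and `K` for its saturation. If `n • x = p • h + q • v` with `n ≠ 0`, pairing
with `h` gives `n (h.x) = -3p`, so `n • (3x + (h.x) h) ∈ ℤv` and primitivity of `v` puts
`3x + (h.x) h` in `ℤv`. Hence `x ↦ (h.x) mod 3` maps `K` to `ℤ/3` with kernel exactly `L`, and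
`[K : L]` is `1` or `3`.

If `K = L`, then `disc K = -3 v²`, and `v²` is even because `h` is characteristic:
`x² ≡ h.x (mod 2)` for all `x`. Otherwise `K = ℤh + ℤu` for some `u` with `3 ∤ h.u`, and
`disc K = -3 u² - (h.u)² ≡ 2 (mod 6)`, since `u² ≡ h.u (mod 2)` and `(h.u)² ≡ 1 (mod 3)`.
-/

theorem le_sat {R M : Type*} [CommRing R] [IsDomain R] [AddCommGroup M] [Module R M]
    (N : Submodule R M) : N ≤ sat N :=
  fun x hx => ⟨1, one_ne_zero, by simpa using hx⟩

section Primitive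

variable {M : Type*} [AddCommGroup M]

def IsPrimitive (v : M) : Prop := ¬ ∃ (m : ℤ) (w : M), 2 ≤ |m| ∧ v = m • w

theorem IsPrimitive.exists_eq_smul [IsAddTorsionFree M] {v y : M} (hv : IsPrimitive v)
    {n m : ℤ} (hn : n ≠ 0) (h : n • y = m • v) : ∃ b, m = n * b ∧ y = b • v := by
  obtain ⟨g, n', m', hg, hcop, rfl, rfl⟩ := Int.exists_gcd_one' (Int.gcd_pos_of_ne_zero_left m hn)
  have h' : n' • y = m' • v := by
    apply zsmul_right_injective (Int.natCast_ne_zero.mpr hg.ne')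
    simpa only [mul_smul, smul_comm (g : ℤ)] using h
  obtain ⟨s, t, hst⟩ := Int.isCoprime_iff_gcd_eq_one.mpr hcop
  have hv' : v = n' • (s • v + t • y) := by linear_combination (norm := module) -hst • v - t • h'
  have hunit : n' * n' = 1 := by
    have hlt : |n'| < 2 := not_le.mp fun h2 => hv ⟨n', _, h2, hv'⟩
    have : n' ≠ 0 := by rintro rfl; simp at hn
    obtain ⟨_, _⟩ := abs_lt.mp hlt
    obtain rfl | rfl : n' = 1 ∨ n' = -1 := by omega
    all_goals norm_num
  refine ⟨n' * m', by linear_combination -m' * ↑g * hunit, ?_⟩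
  linear_combination (norm := module) n' • h' - hunit • y

end Primitive

section Saturation

open Submodule

variable {M : Type*} [AddCommGroup M] (B : LinearMap.BilinForm ℤ M) {h v : M}

theorem three_dvd_of_smul_eq_three_smul (hh : B h h = -3) {n : ℤ} {w : M}
    (heq : n • h = (3 : ℤ) • w) : 3 ∣ n := by
  have hsq : n * n = 3 * -(B w w) := by
    have := congrArg (fun z => B z z) heq
    simp only [map_smul, LinearMap.smul_apply, smul_eq_mul, hh] at this
    linarith
  exact (Int.prime_three.dvd_mul.mp ⟨_, hsq⟩).elim id id

variable [IsAddTorsionFree M]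

theorem three_smul_eq_of_mem_sat (hh : B h h = -3) (hhv : B h v = 0) (hv : IsPrimitive v)
    {x : M} (hx : x ∈ sat (span ℤ {h, v})) : ∃ q : ℤ, (3 : ℤ) • x = (-B h x) • h + q • v := by
  obtain ⟨n, hn, hnx⟩ := hx
  obtain ⟨p, q, hpq⟩ := mem_span_pair.mp hnx
  have hBx : n * B h x = -3 * p := by
    have := congrArg (B h) hpq
    simp only [map_add, map_smul, smul_eq_mul, hh, hhv] at this
    linear_combination -this
  have key : n • ((3 : ℤ) • x + B h x • h) = (3 * q) • v := by
    linear_combination (norm := module) -(3 : ℤ) • hpq + hBx • h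
  obtain ⟨b, -, hb⟩ := hv.exists_eq_smul hn key
  exact ⟨b, by linear_combination (norm := module) hb⟩

theorem mem_span_pair_iff_three_dvd (hh : B h h = -3) (hhv : B h v = 0) (hv : IsPrimitive v)
    {x : M} (hx : x ∈ sat (span ℤ {h, v})) : x ∈ span ℤ {h, v} ↔ 3 ∣ B h x := by
  constructor
  · intro hmem
    obtain ⟨p, q, rfl⟩ := mem_span_pair.mp hmem
    simp only [map_add, map_smul, smul_eq_mul, hh, hhv]
    exact ⟨-p, by ring⟩
  · rintro ⟨c, hc⟩
    obtain ⟨q, hq⟩ := three_smul_eq_of_mem_sat B hh hhv hv hx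
    have : (3 : ℤ) • (x + c • h) = q • v := by
      rw [hc] at hq; linear_combination (norm := module) hq
    obtain ⟨b, -, hb⟩ := hv.exists_eq_smul three_ne_zero this
    exact mem_span_pair.mpr ⟨-c, b, by linear_combination (norm := module) -hb⟩

theorem relIndex_span_pair_sat_eq_three (hh : B h h = -3) (hhv : B h v = 0) (hv : IsPrimitive v)
    (hne : sat (span ℤ {h, v}) ≠ span ℤ {h, v}) :
    (span ℤ {h, v}).toAddSubgroup.relIndex (sat (span ℤ {h, v})).toAddSubgroup = 3 := by
  let f : M →+ ZMod 3 := (Int.castAddHom (ZMod 3)).comp (B h).toAddMonoidHom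
  have hf : ∀ x, f x = 0 ↔ 3 ∣ B h x := fun x => ZMod.intCast_zmod_eq_zero_iff_dvd _ 3
  have hker : f.ker ⊓ (sat (span ℤ {h, v})).toAddSubgroup = (span ℤ {h, v}).toAddSubgroup := by
    ext x
    simp only [AddSubgroup.mem_inf, AddMonoidHom.mem_ker, hf, Submodule.mem_toAddSubgroup]
    exact ⟨fun ⟨h3, hx⟩ => (mem_span_pair_iff_three_dvd B hh hhv hv hx).2 h3,
      fun hx => ⟨(mem_span_pair_iff_three_dvd B hh hhv hv (le_sat _ hx)).1 hx, le_sat _ hx⟩⟩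
  have htop : (sat (span ℤ {h, v})).toAddSubgroup.map f = ⊤ := by
    have : Fact (Nat.card (ZMod 3)).Prime := ⟨by rw [Nat.card_zmod]; norm_num⟩
    refine (AddSubgroup.eq_bot_or_eq_top_of_prime_card _).resolve_left fun hbot => hne ?_
    refine le_antisymm (fun x hx => ?_) (le_sat _)
    have : f x = 0 := by rw [← AddSubgroup.mem_bot, ← hbot]; exact ⟨x, hx, rfl⟩
    exact (mem_span_pair_iff_three_dvd B hh hhv hv hx).2 ((hf x).1 this)
  rw [← hker, AddSubgroup.inf_relIndex_right, AddSubgroup.relIndex_ker, htop,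
    AddSubgroup.card_top, Nat.card_zmod]

theorem exists_three_smul_eq_smul_add (hh : B h h = -3) (hhv : B h v = 0) (hv : IsPrimitive v)
    (hne : sat (span ℤ {h, v}) ≠ span ℤ {h, v}) :
    ∃ u ∈ sat (span ℤ {h, v}), ∃ a : ℤ, ¬ 3 ∣ B h u ∧ (3 : ℤ) • u = a • h + v := by
  obtain ⟨y, hyK, hyL⟩ := SetLike.exists_of_lt (lt_of_le_of_ne (le_sat _) hne.symm)
  have hy3 : ¬ 3 ∣ B h y := fun h3 => hyL ((mem_span_pair_iff_three_dvd B hh hhv hv hyK).2 h3)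
  obtain ⟨q, hq⟩ := three_smul_eq_of_mem_sat B hh hhv hv hyK
  have hq3 : ¬ 3 ∣ q := by
    rintro ⟨q', rfl⟩
    refine hy3 (dvd_neg.mp (three_dvd_of_smul_eq_three_smul B hh (w := y - q' • v) ?_))
    linear_combination (norm := module) -hq
  obtain ⟨s, t, hst⟩ := Int.prime_three.coprime_iff_not_dvd.2 hq3
  have hvK : v ∈ sat (span ℤ {h, v}) := le_sat _ (subset_span (by simp))
  refine ⟨t • y + s • v, add_mem (smul_mem _ _ hyK) (smul_mem _ _ hvK), -(t * B h y), ?_,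
    by linear_combination (norm := module) t • hq + hst • v⟩
  simp only [map_add, map_smul, hhv, smul_eq_mul, mul_zero, add_zero]
  intro h3
  rcases Int.prime_three.dvd_or_dvd h3 with ht | hy
  · exact absurd (hst ▸ dvd_add (dvd_mul_left 3 s) (dvd_mul_of_dvd_left ht q)) (by norm_num)
  · exact hy3 hy

theorem sat_eq_span_pair_of_three_smul_eq (hh : B h h = -3) (hhv : B h v = 0)
    (hv : IsPrimitive v) {u : M} (huK : u ∈ sat (span ℤ {h, v})) (hu : ¬ 3 ∣ B h u) {a : ℤ}
    (hu3 : (3 : ℤ) • u = a • h + v) : sat (span ℤ {h, v}) = span ℤ {h, u} := by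
  have hu_mem : u ∈ span ℤ {h, u} := subset_span (by simp)
  refine le_antisymm (fun z hz => ?_) (span_le.2 ?_)
  · obtain ⟨e, f, hef⟩ := Int.prime_three.coprime_iff_not_dvd.2 hu
    have hzL : z - (f * B h z) • u ∈ span ℤ {h, v} := by
      refine (mem_span_pair_iff_three_dvd B hh hhv hv
        (sub_mem hz (smul_mem _ _ huK))).2 ⟨e * B h z, ?_⟩
      simp only [map_sub, map_smul, smul_eq_mul]
      linear_combination -B h z * hef
    have hLu : span ℤ {h, v} ≤ span ℤ {h, u} := by
      refine span_le.2 (Set.insert_subset_iff.2 ⟨subset_span (by simp), ?_⟩)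
      rw [Set.singleton_subset_iff, SetLike.mem_coe, mem_span_pair]
      exact ⟨-a, 3, by linear_combination (norm := module) hu3⟩
    simpa using add_mem (hLu hzL) (smul_mem _ (f * B h z) hu_mem)
  · exact Set.insert_subset_iff.2
      ⟨le_sat _ (subset_span (by simp)), Set.singleton_subset_iff.2 huK⟩

end Saturation

section GramDet

variable {R M : Type*} [CommRing R] [AddCommGroup M] [Module R M]

def gramDet (B : LinearMap.BilinForm R M) (x y : M) : R := B x x * B y y - B x y * B y x

theorem gramDet_smul_add_smul (B : LinearMap.BilinForm R M) (x y : M) (p q r s : R) :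
    gramDet B (p • x + q • y) (r • x + s • y) = (p * s - q * r) ^ 2 * gramDet B x y := by
  simp only [gramDet, map_add, map_smul, LinearMap.add_apply, LinearMap.smul_apply, smul_eq_mul]
  ring

end GramDet

section Discriminant

open Submodule

variable {M : Type*} [AddCommGroup M] (B : LinearMap.BilinForm ℤ M) {h : M}

theorem gramDet_eq_of_span_eq {x y x' y' : M} (hspan : span ℤ {x, y} = span ℤ {x', y'}) :
    gramDet B x y = gramDet B x' y' := by
  have mem_left : ∀ {a b : M}, a ∈ span ℤ {a, b} := subset_span (by simp)
  have mem_right : ∀ {a b : M}, b ∈ span ℤ {a, b} := subset_span (by simp)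
  obtain ⟨p, q, hx⟩ := mem_span_pair.mp (hspan ▸ mem_left : x ∈ span ℤ {x', y'})
  obtain ⟨r, s, hy⟩ := mem_span_pair.mp (hspan ▸ mem_right : y ∈ span ℤ {x', y'})
  obtain ⟨p', q', hx'⟩ := mem_span_pair.mp (hspan ▸ mem_left : x' ∈ span ℤ {x, y})
  obtain ⟨r', s', hy'⟩ := mem_span_pair.mp (hspan ▸ mem_right : y' ∈ span ℤ {x, y})
  have hD := gramDet_smul_add_smul B x' y' p q r s
  have hD' := gramDet_smul_add_smul B x y p' q' r' s'
  rw [hx, hy] at hD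
  rw [hx', hy'] at hD'
  by_cases h0 : gramDet B x' y' = 0
  · rw [hD, h0, mul_zero]
  · have hunit : (p * s - q * r) ^ 2 * (p' * s' - q' * r') ^ 2 = 1 := by
      apply mul_left_cancel₀ h0
      linear_combination -hD' - (p' * s' - q' * r') ^ 2 * hD
    rw [hD, Int.eq_one_of_mul_eq_one_right (sq_nonneg _) hunit, one_mul]

theorem gramDet_emod_six_eq_zero (hh : B h h = -3) (hchar : ∀ x, B x x ≡ B h x [ZMOD 2])
    {v : M} (hhv : B h v = 0) : gramDet B h v % 6 = 0 := by
  have hv2 : 2 ∣ B v v := Int.modEq_zero_iff_dvd.1 (hhv ▸ hchar v)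
  simp only [gramDet, hh, hhv]
  omega

theorem gramDet_emod_six_eq_two (hB : B.IsSymm) (hh : B h h = -3)
    (hchar : ∀ x, B x x ≡ B h x [ZMOD 2]) {u : M} (hu : ¬ 3 ∣ B h u) : gramDet B h u % 6 = 2 := by
  have hu2 := hchar u
  rw [gramDet, hh, ← hB.eq h u]
  unfold Int.ModEq at hu2
  generalize B h u = a at hu hu2
  have ha3 : a * a % 3 = 1 := by
    rcases (by omega : a % 3 = 1 ∨ a % 3 = 2) with ha | ha <;> simp [Int.mul_emod, ha]
  have ha2 : a * a % 2 = a % 2 := by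
    rcases Int.emod_two_eq_zero_or_one a with ha | ha <;> simp [Int.mul_emod, ha]
  omega

end Discriminant

open Matrix in
theorem Matrix.IsSymm.dotProduct_mulVec_self_modEq_two {n : Type*} [Fintype n] [LinearOrder n]
    {A : Matrix n n ℤ} (hA : A.IsSymm) (x : n → ℤ) :
    x ⬝ᵥ A *ᵥ x ≡ ∑ i, A i i * x i [ZMOD 2] := by
  let U : Matrix n n ℤ := Matrix.of fun i j => if i < j then A i j else 0
  have hsplit : A = Matrix.diagonal (fun i => A i i) + U + Uᵀ := by
    ext i j
    rcases lt_trichotomy i j with hij | rfl | hij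
    · simp [U, hij, hij.ne, not_lt.2 hij.le]
    · simp [U]
    · simp [U, hij, hij.ne', not_lt.2 hij.le, hA.apply]
  have hU : x ⬝ᵥ Uᵀ *ᵥ x = x ⬝ᵥ U *ᵥ x := by
    rw [Matrix.dotProduct_mulVec, Matrix.vecMul_transpose, dotProduct_comm]
  have hdiag : x ⬝ᵥ Matrix.diagonal (fun i => A i i) *ᵥ x = ∑ i, A i i * (x i * x i) := by
    simp only [dotProduct, Matrix.mulVec_diagonal]
    exact Finset.sum_congr rfl fun i _ => by ring
  have hsq : ∀ z : ℤ, z * z ≡ z [ZMOD 2] := fun z => by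
    rcases Int.emod_two_eq_zero_or_one z with hz | hz <;> simp [Int.ModEq, Int.mul_emod, hz]
  conv_lhs => rw [hsplit]
  rw [Matrix.add_mulVec, Matrix.add_mulVec, dotProduct_add, dotProduct_add, hU, hdiag]
  calc _ ≡ ∑ i, A i i * (x i * x i) [ZMOD 2] := by
        unfold Int.ModEq; omega
    _ ≡ ∑ i, A i i * x i [ZMOD 2] := Int.ModEq.sum fun i _ => (hsq (x i)).mul_left _

section CubicLattice

open Matrix

def gramForm : LinearMap.BilinForm ℤ (Fin 23 → ℤ) := Matrix.toBilin' (Matrix.of gramC)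

theorem GB_eq_gramForm (x y : Fin 23 → ℤ) : GB x y = gramForm x y := by
  simp only [GB, gramForm, Matrix.toBilin'_apply, Matrix.of_apply]
  exact Finset.sum_congr rfl fun i _ => Finset.sum_congr rfl fun j _ => by ring

theorem isSymm_gramC : (Matrix.of gramC).IsSymm :=
  Matrix.IsSymm.ext (by decide : ∀ i j : Fin 23, gramC j i = gramC i j)

theorem gramForm_isSymm : gramForm.IsSymm := Matrix.isSymm_toBilin'_iff_isSymm.2 isSymm_gramC

theorem gramForm_h2_h2 : gramForm h2 h2 = -3 := by
  rw [← GB_eq_gramForm]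
  decide

theorem gramForm_self_modEq_h2 (x : Fin 23 → ℤ) : gramForm x x ≡ gramForm h2 x [ZMOD 2] := by
  have hdiag : ∀ i, gramC i i ≡ (h2 ᵥ* Matrix.of gramC) i [ZMOD 2] := by decide
  simp only [gramForm, Matrix.toBilin'_apply', Matrix.dotProduct_mulVec h2]
  calc _ ≡ ∑ i, gramC i i * x i [ZMOD 2] := isSymm_gramC.dotProduct_mulVec_self_modEq_two x
    _ ≡ ∑ i, (h2 ᵥ* Matrix.of gramC) i * x i [ZMOD 2] :=
        Int.ModEq.sum fun i _ => (hdiag i).mul_right _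

end CubicLattice

theorem stmt_2_general (v : Fin 23 → ℤ) (hvG : inGamma v) (hv : PrimitiveC v)
    (d : ℤ) (hd : discIs v d) :
    (d % 6 = 0 ↔ Kv v = Submodule.span ℤ ({h2, v} : Set (Fin 23 → ℤ))) ∧
    (d % 6 = 2 ↔ idx v = 3) := by
  obtain ⟨x, y, hK, rfl⟩ := hd
  have hhv : gramForm h2 v = 0 := (GB_eq_gramForm h2 v).symm.trans hvG
  simp only [GB_eq_gramForm]
  change (gramDet gramForm x y % 6 = 0 ↔ _) ∧ (gramDet gramForm x y % 6 = 2 ↔ _)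
  by_cases hKL : Kv v = Submodule.span ℤ {h2, v}
  · have hd : gramDet gramForm x y % 6 = 0 := by
      rw [gramDet_eq_of_span_eq gramForm (hK.symm.trans hKL)]
      exact gramDet_emod_six_eq_zero gramForm gramForm_h2_h2 gramForm_self_modEq_h2 hhv
    have hidx : idx v = 1 := by rw [idx, hKL]; exact AddSubgroup.relIndex_self _
    exact ⟨⟨fun _ => hKL, fun _ => hd⟩, ⟨fun _ => by omega, fun _ => by omega⟩⟩
  · obtain ⟨u, huK, a, hu, hu3⟩ := exists_three_smul_eq_smul_add gramForm gramForm_h2_h2 hhv hv hKL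
    have hKu := sat_eq_span_pair_of_three_smul_eq gramForm gramForm_h2_h2 hhv hv huK hu hu3
    have hd : gramDet gramForm x y % 6 = 2 := by
      rw [gramDet_eq_of_span_eq gramForm (hK.symm.trans hKu)]
      exact gramDet_emod_six_eq_two gramForm gramForm_isSymm gramForm_h2_h2
        gramForm_self_modEq_h2 hu
    exact ⟨⟨fun _ => by omega, fun hKL' => absurd hKL' hKL⟩,
      ⟨fun _ => relIndex_span_pair_sat_eq_three gramForm gramForm_h2_h2 hhv hv hKL, fun _ => hd⟩⟩

/-- For a primitive `v ∈ Γ` with `(v.v) < 0`, one has `disc K_v ≡ 0 (mod 6)` iff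
`K_v = ℤh² + ℤv`, and `disc K_v ≡ 2 (mod 6)` iff `ℤh² + ℤv` has index `3` in `K_v`. -/
theorem stmt_2 (v : Fin 23 → ℤ) (hvG : inGamma v) (hv : PrimitiveC v)
    (hneg : GB v v < 0) (d : ℤ) (hd : discIs v d) :
    (d % 6 = 0 ↔ Kv v = Submodule.span ℤ ({h2, v} : Set (Fin 23 → ℤ))) ∧
    (d % 6 = 2 ↔ idx v = 3) :=
  stmt_2_general v hvG hv d hd
end

section
/- For every primitive v ∈ Γ, the subgroup {(v.w) : w ∈ Γ} of ℤ equals either ℤ or 3ℤ. -/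
open scoped BigOperators

/-! `Γ̄` is unimodular, so a primitive `v` pairs to `1` with some `w ∈ Γ̄`, and then
`3w + (h².w)h²` lies in `Γ` and pairs to `3` with `v`. Hence the ideal `{v.w : w ∈ Γ}` of `ℤ`
contains the prime `3`, so it is `ℤ` or `3ℤ`. -/

lemma Int.span_range_eq_top_of_not_exists_smul {ι : Type*} (v : ι → ℤ)
    (hv : ¬ ∃ (m : ℤ) (w : ι → ℤ), 2 ≤ |m| ∧ v = m • w) : Ideal.span (Set.range v) = ⊤ := by
  obtain ⟨d, hspan⟩ := (IsPrincipalIdealRing.principal (Ideal.span (Set.range v))).principal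
  have hdvd (i : ι) : d ∣ v i := by
    rw [← Ideal.mem_span_singleton, ← Ideal.submodule_span_eq, ← hspan]
    exact Ideal.subset_span ⟨i, rfl⟩
  choose w hw using hdvd
  have hvw : v = d • w := funext hw
  have hd : |d| = 1 := by
    by_contra hne
    rcases eq_or_ne d 0 with rfl | hd0
    · exact hv ⟨2, 0, by norm_num, by simp [hvw]⟩
    · exact hv ⟨d, w, by have := abs_pos.mpr hd0; omega, hvw⟩
  rw [hspan, Ideal.submodule_span_eq, Ideal.span_singleton_eq_top]
  exact Int.isUnit_iff_abs_eq.mpr hd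

open Matrix in
lemma Matrix.exists_dotProduct_mulVec_eq_one {R ι : Type*} [CommRing R] [Fintype ι]
    [DecidableEq ι] {G : Matrix ι ι R} (hG : IsUnit G) {v : ι → R}
    (hv : Ideal.span (Set.range v) = ⊤) : ∃ w, v ⬝ᵥ (G *ᵥ w) = 1 := by
  have hone : (1 : R) ∈ Ideal.span (Set.range v) := hv ▸ Submodule.mem_top
  obtain ⟨c, hc⟩ := (Submodule.mem_span_range_iff_exists_fun R).mp hone
  obtain ⟨u, rfl⟩ := hG
  refine ⟨(↑u⁻¹ : Matrix ι ι R) *ᵥ c, ?_⟩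
  rw [Matrix.mulVec_mulVec, u.mul_inv, Matrix.one_mulVec, dotProduct_comm]
  simpa [dotProduct] using hc

lemma Ideal.eq_top_or_eq_span_singleton_of_prime_mem {R : Type*} [CommRing R]
    [IsDomain R] [IsPrincipalIdealRing R] {I : Ideal R} {p : R} (hp : Prime p) (hpI : p ∈ I) :
    I = ⊤ ∨ I = Ideal.span {p} := by
  by_cases hI : I = ⊤
  · exact Or.inl hI
  · exact Or.inr ((PrincipalIdealRing.isMaximal_of_irreducible hp.irreducible).eq_of_le hI
      ((Ideal.span_singleton_le_iff_mem I).mpr hpI)).symm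

def E8MInv : Matrix (Fin 8) (Fin 8) ℤ :=
  !![-4, -5, -7, -10, -8, -6, -4, -2;
    -5, -8, -10, -15, -12, -9, -6, -3;
    -7, -10, -14, -20, -16, -12, -8, -4;
    -10, -15, -20, -30, -24, -18, -12, -6;
    -8, -12, -16, -24, -20, -15, -10, -5;
    -6, -9, -12, -18, -15, -12, -8, -4;
    -4, -6, -8, -12, -10, -8, -6, -3;
    -2, -3, -4, -6, -5, -4, -3, -2]

/-- `U` and `diag(-1,-1,-1)` are involutions, so only the `E₈` blocks of `gramC` change. -/
def gramCInv : Matrix (Fin 23) (Fin 23) ℤ := Matrix.of fun i j =>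
  if i.val < 8 ∧ j.val < 8 then
    E8MInv ⟨i.val % 8, Nat.mod_lt _ (by norm_num)⟩ ⟨j.val % 8, Nat.mod_lt _ (by norm_num)⟩
  else if 8 ≤ i.val ∧ i.val < 16 ∧ 8 ≤ j.val ∧ j.val < 16 then
    E8MInv ⟨(i.val - 8) % 8, Nat.mod_lt _ (by norm_num)⟩
      ⟨(j.val - 8) % 8, Nat.mod_lt _ (by norm_num)⟩
  else gramC i j

lemma gramC_mul_gramCInv : Matrix.of gramC * gramCInv = 1 := by
  ext i j
  rw [Matrix.mul_apply, Matrix.one_apply]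
  revert i j
  decide

lemma GB_eq_toLinearMap₂' (x y : Fin 23 → ℤ) :
    GB x y = Matrix.toLinearMap₂' ℤ (Matrix.of gramC) x y := by
  simp only [GB, Matrix.toLinearMap₂'_apply, Matrix.of_apply]
  exact Finset.sum_congr rfl fun i _ => Finset.sum_congr rfl fun j _ => by ring

lemma GB_comm (x y : Fin 23 → ℤ) : GB x y = GB y x := by
  have gramC_symm : ∀ i j, gramC i j = gramC j i := by decide
  rw [GB, Finset.sum_comm]
  exact Finset.sum_congr rfl fun i _ => Finset.sum_congr rfl fun j _ => by rw [gramC_symm]; ring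

lemma GB_h2_h2 : GB h2 h2 = -3 := by decide

lemma exists_GB_eq_one {v : Fin 23 → ℤ} (hv : PrimitiveC v) : ∃ w, GB v w = 1 := by
  simp only [GB_eq_toLinearMap₂', Matrix.toLinearMap₂'_apply']
  exact Matrix.exists_dotProduct_mulVec_eq_one (IsUnit.of_mul_eq_one _ gramC_mul_gramCInv)
    (Int.span_range_eq_top_of_not_exists_smul v hv)

lemma exists_inGamma_GB_eq_three {v : Fin 23 → ℤ} (hvG : inGamma v) (hv : PrimitiveC v) :
    ∃ w, inGamma w ∧ GB v w = 3 := by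
  obtain ⟨w, hw⟩ := exists_GB_eq_one hv
  have hvh : GB v h2 = 0 := (GB_comm v h2).trans hvG
  refine ⟨(3 : ℤ) • w + GB h2 w • h2, ?_, ?_⟩
  · rw [inGamma, GB_add_right, GB_smul_right, GB_smul_right, GB_h2_h2]
    ring
  · rw [GB_add_right, GB_smul_right, GB_smul_right, hw, hvh]
    ring

/-- For every primitive `v ∈ Γ`, the subgroup `{(v.w) : w ∈ Γ} ⊆ ℤ` equals
either `ℤ` or `3ℤ`. -/
theorem stmt_13 (v : Fin 23 → ℤ) (hvG : inGamma v) (hv : PrimitiveC v) :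
    {n : ℤ | ∃ w : Fin 23 → ℤ, inGamma w ∧ GB v w = n} = (Set.univ : Set ℤ) ∨
    {n : ℤ | ∃ w : Fin 23 → ℤ, inGamma w ∧ GB v w = n} = {n : ℤ | (3 : ℤ) ∣ n} := by
  set I : Ideal ℤ := Gamma.map (Matrix.toLinearMap₂' ℤ (Matrix.of gramC) v)
  have hI : {n : ℤ | ∃ w : Fin 23 → ℤ, inGamma w ∧ GB v w = n} = I := by
    ext n
    simp [I, GB_eq_toLinearMap₂', inGamma, Gamma]
  have h3 : (3 : ℤ) ∈ (I : Set ℤ) := hI ▸ exists_inGamma_GB_eq_three hvG hv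
  rw [hI]
  rcases Ideal.eq_top_or_eq_span_singleton_of_prime_mem Int.prime_three h3 with h | h
  · exact Or.inl (by rw [h]; rfl)
  · exact Or.inr (by ext n; rw [h, SetLike.mem_coe, Ideal.mem_span_singleton]; rfl)
end
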